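/- Let S, Y ⊆ ℝ^d with S bounded, and ψ : S → ℝ a differentiable convex function such that ∇ψ : Int(S) → Int(Y) is a homeomorphism. Let φ : ℝ^d → ℝ be a convex function with ∂φ(ℝ^d) ⊆ S such that: whenever y = ∇ψ(x) for some x ∈ S, then x ∈ ∂φ(y). Then ψ*, the convex conjugate of ψ, is differentiable everywhere on Int(Y); φ is differentiable everywhere on Int(Y); and ∇φ(y) = ∇ψ*(y) for all y ∈ Int(Y). -/

import Mathlib

open scoped RealInnerProductSpace
open Filter

noncomputable section

abbrev E (d : ℕ) : Type := EuclideanSpace ℝ (Fin d)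

/-- Subdifferential of a real-valued function at a point. -/
def subdiffR {d : ℕ} (f : E d → ℝ) (x : E d) : Set (E d) :=
  {ξ | ∀ y : E d, f x + ⟪ξ, y - x⟫ ≤ f y}

/-- Subdifferential of an `EReal`-valued function at a point. -/
def subdiffE {d : ℕ} (f : E d → EReal) (x : E d) : Set (E d) :=
  {ξ | ∀ y : E d, f x + ((⟪ξ, y - x⟫ : ℝ) : EReal) ≤ f y}

/-- Convexity of an `EReal`-valued function. -/
def ConvexE {d : ℕ} (f : E d → EReal) : Prop :=
  ∀ x y : E d, ∀ a b : ℝ, 0 ≤ a → 0 ≤ b → a + b = 1 →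
    f (a • x + b • y) ≤ (a : EReal) * f x + (b : EReal) * f y

/-- Legendre–Fenchel dual of `ψ : S → ℝ` (extended by `+∞` outside `S`), i.e.
`ψ*(y) = sup_{x ∈ S} (⟪x, y⟫ − ψ x)`, with values in `EReal`. -/
def econjOn {d : ℕ} (f : E d → ℝ) (S : Set (E d)) (y : E d) : EReal :=
  ⨆ x : S, (((⟪(x : E d), y⟫ : ℝ) - f x : ℝ) : EReal)

/-!
Write `G` for the inverse of `∇ψ`, which is continuous on `Int Y`. For `y' ∈ Int Y` the gradient
inequality gives `ψ*(y') = ⟪G y', y'⟫ - ψ (G y')`, so `G y'` is a subgradient of `ψ*` at `y'`;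
by hypothesis `G y'` is also a subgradient of `φ` at `y'`. For either function, a subgradient `v`
at `y` satisfies the monotonicity inequality `0 ≤ ⟪G y' - v, y' - y⟫` for all `y'` near `y`, and
letting `y' = y + t u` with `t → 0⁺` yields `⟪G y - v, u⟫ ≥ 0` for every `u`, i.e. `v = G y`.
-/

open Topology Set

section InnerProductSpace

variable {F : Type*} [NormedAddCommGroup F] [InnerProductSpace ℝ F]

theorem ConvexOn.add_inner_gradient_le [CompleteSpace F] {s : Set F} {f : F → ℝ} {x z g : F}
    (hf : ConvexOn ℝ s f) (hx : x ∈ s) (hz : z ∈ s) (hg : HasGradientAt f g x) :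
    f x + ⟪g, z - x⟫ ≤ f z := by
  let L := AffineMap.lineMap (k := ℝ) x z
  have hL : HasDerivAt (f ∘ L) ⟪g, z - x⟫ 0 := by
    have hfL : HasFDerivAt f (InnerProductSpace.toDual ℝ F g) (L 0) := by
      simpa [L] using hg.hasFDerivAt
    simpa using hfL.comp_hasDerivAt (0 : ℝ) AffineMap.hasDerivAt_lineMap
  have hslope := (hf.comp_affineMap L).le_slope_of_hasDerivAt
    (by simpa [L] using hx) (by simpa [L] using hz) zero_lt_one hL
  simp only [slope_def_field, Function.comp_apply, L, AffineMap.lineMap_apply_zero,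
    AffineMap.lineMap_apply_one, sub_zero, div_one] at hslope
  linarith

theorem eq_of_forall_inner_sub_nonneg {G : F → F} {y v : F} (hG : ContinuousAt G y)
    (h : ∀ᶠ y' in 𝓝 y, 0 ≤ ⟪G y' - v, y' - y⟫) : v = G y := by
  have hdir : ∀ u : F, 0 ≤ ⟪G y - v, u⟫ := by
    intro u
    have hline : Tendsto (fun t : ℝ => y + t • u) (𝓝[>] 0) (𝓝 y) := by
      have : Continuous (fun t : ℝ => y + t • u) := by fun_prop
      simpa using (this.tendsto 0).mono_left nhdsWithin_le_nhds
    have hlim : Tendsto (fun t : ℝ => ⟪G (y + t • u) - v, u⟫) (𝓝[>] 0) (𝓝 ⟪G y - v, u⟫) :=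
      ((hG.tendsto.comp hline).sub tendsto_const_nhds).inner tendsto_const_nhds
    refine ge_of_tendsto hlim ?_
    filter_upwards [hline.eventually h, self_mem_nhdsWithin] with t ht (htpos : 0 < t)
    rw [add_sub_cancel_left, inner_smul_right] at ht
    exact nonneg_of_mul_nonneg_right ht htpos
  have hself := hdir (v - G y)
  rw [← neg_sub, inner_neg_left, neg_nonneg, real_inner_self_nonpos] at hself
  exact sub_eq_zero.mp hself

end InnerProductSpace

theorem exists_continuousOn_rightInvOn_of_homeomorph {α β : Type*} [TopologicalSpace α]
    [TopologicalSpace β] [Nonempty α] {U : Set α} {V : Set β} {g : α → β} (h : U ≃ₜ V)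
    (hg : ∀ p : U, (h p : β) = g p) :
    ∃ G : β → α, ContinuousOn G V ∧ MapsTo G V U ∧ RightInvOn G g V := by
  classical
  let G : β → α := fun y => if hy : y ∈ V then h.symm ⟨y, hy⟩ else Classical.arbitrary α
  refine ⟨G, ?_, fun y hy => by simp [G, hy], fun y hy => ?_⟩
  · rw [continuousOn_iff_continuous_domRestrict]
    have hrestrict : V.domRestrict G = fun q => (h.symm q : α) := by
      funext q
      simp [G, Set.domRestrict, q.2]
    rw [hrestrict]
    fun_prop
  · simpa [G, hy] using (hg (h.symm ⟨y, hy⟩)).symm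

variable {d : ℕ}

theorem subdiffR_eq_subdiffE (f : E d → ℝ) (x : E d) :
    subdiffR f x = subdiffE (fun z => (f z : EReal)) x := by
  ext ξ
  simp only [subdiffR, subdiffE, mem_ofPred_eq, ← EReal.coe_add, EReal.coe_le_coe_iff]

theorem inner_sub_nonneg_of_mem_subdiffE {f : E d → EReal} {y y' a b : E d} {r r' : ℝ}
    (hy : f y = r) (hy' : f y' = r') (ha : a ∈ subdiffE f y) (hb : b ∈ subdiffE f y') :
    0 ≤ ⟪b - a, y' - y⟫ := by
  have hay := ha y'
  have hby := hb y
  rw [hy, hy', ← EReal.coe_add, EReal.coe_le_coe_iff] at hay hby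
  rw [← neg_sub y' y, inner_neg_right] at hby
  rw [inner_sub_left]
  linarith

theorem subdiffE_eq_singleton_of_continuousAt {f : E d → EReal} {G : E d → E d} {y : E d}
    (hG : ContinuousAt G y)
    (hsel : ∀ᶠ y' in 𝓝 y, (∃ r : ℝ, f y' = r) ∧ G y' ∈ subdiffE f y') :
    subdiffE f y = {G y} := by
  obtain ⟨⟨r, hr⟩, hGy⟩ := hsel.self_of_nhds
  refine eq_singleton_iff_unique_mem.mpr ⟨hGy, fun v hv => ?_⟩
  refine eq_of_forall_inner_sub_nonneg hG ?_
  filter_upwards [hsel] with y' ⟨⟨r', hr'⟩, hGy'⟩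
  exact inner_sub_nonneg_of_mem_subdiffE hr hr' hv hGy'

theorem econjOn_eq_of_hasGradientAt {S : Set (E d)} {ψ : E d → ℝ} {x y : E d}
    (hψ : ConvexOn ℝ S ψ) (hx : x ∈ S) (hg : HasGradientAt ψ y x) :
    econjOn ψ S y = ((⟪x, y⟫ - ψ x : ℝ) : EReal) := by
  refine le_antisymm (iSup_le fun w => ?_) (le_iSup_of_le ⟨x, hx⟩ le_rfl)
  have hgrad := hψ.add_inner_gradient_le hx w.2 hg
  rw [inner_sub_right, real_inner_comm (w : E d) y, real_inner_comm x y] at hgrad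
  exact EReal.coe_le_coe_iff.mpr (by linarith)

theorem mem_subdiffE_econjOn {S : Set (E d)} {ψ : E d → ℝ} {x y : E d} (hx : x ∈ S)
    (hy : econjOn ψ S y = ((⟪x, y⟫ - ψ x : ℝ) : EReal)) :
    x ∈ subdiffE (econjOn ψ S) y := by
  intro z
  rw [hy, ← EReal.coe_add]
  have hyz : ⟪x, y⟫ - ψ x + ⟪x, z - y⟫ = ⟪x, z⟫ - ψ x := by
    rw [inner_sub_right]
    ring
  rw [hyz]
  exact le_iSup_of_le (⟨x, hx⟩ : S) le_rfl

theorem statement16_general {d : ℕ} (S Y : Set (E d))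
    (ψ : E d → ℝ) (hψconv : ConvexOn ℝ S ψ)
    (gψ : E d → E d) (hψdiff : ∀ x ∈ S, HasGradientAt ψ (gψ x) x)
    (hhom : ∃ h : (interior S) ≃ₜ (interior Y), ∀ p : interior S, (h p : E d) = gψ p)
    (φ : E d → ℝ)
    (hkey : ∀ x ∈ S, ∀ y : E d, gψ x = y → x ∈ subdiffR φ y) :
    ∀ y ∈ interior Y, ∃ v : E d,
      subdiffE (econjOn ψ S) y = {v} ∧ subdiffR φ y = {v} := by
  obtain ⟨h, hh⟩ := hhom
  obtain ⟨G, hGcont, hGmaps, hGinv⟩ := exists_continuousOn_rightInvOn_of_homeomorph h hh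
  intro y hy
  have hGy : ContinuousAt G y := hGcont.continuousAt (isOpen_interior.mem_nhds hy)
  have hnear : ∀ᶠ y' in 𝓝 y, G y' ∈ S ∧ gψ (G y') = y' := by
    filter_upwards [isOpen_interior.mem_nhds hy] with y' hy'
    exact ⟨interior_subset (hGmaps hy'), hGinv hy'⟩
  refine ⟨G y, subdiffE_eq_singleton_of_continuousAt hGy ?_, ?_⟩
  · filter_upwards [hnear] with y' ⟨hS, hinv⟩
    have hval := econjOn_eq_of_hasGradientAt hψconv hS (hinv ▸ hψdiff _ hS)
    exact ⟨⟨_, hval⟩, mem_subdiffE_econjOn hS hval⟩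
  · rw [subdiffR_eq_subdiffE]
    refine subdiffE_eq_singleton_of_continuousAt hGy ?_
    filter_upwards [hnear] with y' ⟨hS, hinv⟩
    exact ⟨⟨_, rfl⟩, subdiffR_eq_subdiffE φ y' ▸ hkey _ hS y' hinv⟩

/-- `S` bounded, `ψ : S → ℝ` differentiable convex with `∇ψ : Int S → Int Y`
a homeomorphism, and `φ : ℝ^d → ℝ` convex with all subgradients in `S` such that
`y = ∇ψ(x)` for `x ∈ S` implies `x ∈ ∂φ(y)`. Then `ψ*` and `φ` are differentiable
everywhere on `Int Y` with `∇φ = ∇ψ*` there (expressed via singleton subdifferentials). -/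
theorem statement16 {d : ℕ} (S Y : Set (E d)) (hSbd : Bornology.IsBounded S)
    (ψ : E d → ℝ) (hψconv : ConvexOn ℝ S ψ)
    (gψ : E d → E d) (hψdiff : ∀ x ∈ S, HasGradientAt ψ (gψ x) x)
    (hhom : ∃ h : (interior S) ≃ₜ (interior Y), ∀ p : interior S, (h p : E d) = gψ p)
    (φ : E d → ℝ) (hφconv : ConvexOn ℝ Set.univ φ)
    (hφsub : ∀ y, subdiffR φ y ⊆ S)
    (hkey : ∀ x ∈ S, ∀ y : E d, gψ x = y → x ∈ subdiffR φ y) :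
    ∀ y ∈ interior Y, ∃ v : E d,
      subdiffE (econjOn ψ S) y = {v} ∧ subdiffR φ y = {v} :=
  statement16_general S Y ψ hψconv gψ hψdiff hhom φ hkey
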